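/- arXiv:2004.05736 — 5 statements merged into one kernel-verified Lean document; each statement's English description precedes it below -/
import Mathlib

section
/- Let K₁ and K₂ be convex subsets of real vector spaces and let f : K₁ → K₂ be a surjective affine map (i.e., f(t·a + (1−t)·a') = t·f(a) + (1−t)·f(a') for all a, a' ∈ K₁ and t ∈ [0,1]). Suppose there exists a point b₀ ∈ K₂ such that: (i) for every b₁ ∈ K₂ there exist b₂ ∈ K₂ and t ∈ (0,1) with b₀ = t·b₁ + (1−t)·b₂ (i.e., b₀ is an internal point of K₂), and (ii) the preimage f⁻¹({b₀}) is a singleton. Then f is injective on K₁. -/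
/-! Pulling two points `a, a'` with `f a = f a'` towards a preimage `a₂` of the point opposite
to `f a` across `b₀` lands both in the fibre over `b₀`; as that fibre is a single point and
the pull is by a nonzero factor, `a = a'`. -/

theorem eq_of_smul_add_eq_smul_add {V : Type*} [AddCommGroup V] [Module ℝ V]
    {t : ℝ} (ht : t ≠ 0) {a a' c : V} (h : t • a + c = t • a' + c) : a = a' :=
  smul_right_injective V ht (add_right_cancel h)

theorem map_combo_eq_of_map_eq {V W : Type*} [AddCommGroup V] [Module ℝ V]
    [AddCommGroup W] [Module ℝ W] {K : Set V} {f : V → W}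
    (haff : ∀ a ∈ K, ∀ a' ∈ K, ∀ t : ℝ, 0 ≤ t → t ≤ 1 →
      f (t • a + (1 - t) • a') = t • f a + (1 - t) • f a')
    {a a' c : V} (ha : a ∈ K) (ha' : a' ∈ K) (hc : c ∈ K) (hfa : f a = f a')
    {t : ℝ} (ht₀ : 0 ≤ t) (ht₁ : t ≤ 1) :
    f (t • a + (1 - t) • c) = f (t • a' + (1 - t) • c) := by
  rw [haff a ha c hc t ht₀ ht₁, haff a' ha' c hc t ht₀ ht₁, hfa]

theorem affine_injOn_of_singleton_fiber_general
    {V W : Type*} [AddCommGroup V] [Module ℝ V] [AddCommGroup W] [Module ℝ W]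
    (K₁ : Set V) (K₂ : Set W) (hK₁ : Convex ℝ K₁)
    (f : V → W)
    (hmaps : ∀ a ∈ K₁, f a ∈ K₂)
    (hsurj : ∀ b ∈ K₂, ∃ a ∈ K₁, f a = b)
    (haff : ∀ a ∈ K₁, ∀ a' ∈ K₁, ∀ t : ℝ, 0 ≤ t → t ≤ 1 →
      f (t • a + (1 - t) • a') = t • f a + (1 - t) • f a')
    (b₀ : W)
    (hinternal : ∀ b₁ ∈ K₂, ∃ b₂ ∈ K₂, ∃ t : ℝ, 0 < t ∧ t < 1 ∧
      b₀ = t • b₁ + (1 - t) • b₂)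
    (hsingleton : ∀ a ∈ K₁, ∀ a' ∈ K₁, f a = b₀ → f a' = b₀ → a = a') :
    Set.InjOn f K₁ := by
  intro a ha a' ha' hfa
  obtain ⟨b₂, hb₂, t, ht₀, ht₁, hb₀⟩ := hinternal (f a) (hmaps a ha)
  obtain ⟨a₂, ha₂, rfl⟩ := hsurj b₂ hb₂
  have hfiber : f (t • a + (1 - t) • a₂) = b₀ := by
    rw [haff a ha a₂ ha₂ t ht₀.le ht₁.le, hb₀]
  have hfiber' : f (t • a' + (1 - t) • a₂) = b₀ := by
    rw [← map_combo_eq_of_map_eq haff ha ha' ha₂ hfa ht₀.le ht₁.le, hfiber]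
  refine eq_of_smul_add_eq_smul_add ht₀.ne' (hsingleton _ ?_ _ ?_ hfiber hfiber')
  · exact hK₁ ha ha₂ ht₀.le (by linarith) (add_sub_cancel t 1)
  · exact hK₁ ha' ha₂ ht₀.le (by linarith) (add_sub_cancel t 1)

/-- Let `K₁` and `K₂` be convex subsets of real vector spaces and `f` a surjective
affine map from `K₁` onto `K₂`. If there is an internal point `b₀` of `K₂` whose
preimage is a singleton, then `f` is injective on `K₁`. -/
theorem affine_injOn_of_singleton_fiber
    {V W : Type*} [AddCommGroup V] [Module ℝ V] [AddCommGroup W] [Module ℝ W]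
    (K₁ : Set V) (K₂ : Set W) (hK₁ : Convex ℝ K₁) (hK₂ : Convex ℝ K₂)
    (f : V → W)
    (hmaps : ∀ a ∈ K₁, f a ∈ K₂)
    (hsurj : ∀ b ∈ K₂, ∃ a ∈ K₁, f a = b)
    (haff : ∀ a ∈ K₁, ∀ a' ∈ K₁, ∀ t : ℝ, 0 ≤ t → t ≤ 1 →
      f (t • a + (1 - t) • a') = t • f a + (1 - t) • f a')
    (b₀ : W) (hb₀ : b₀ ∈ K₂)
    (hinternal : ∀ b₁ ∈ K₂, ∃ b₂ ∈ K₂, ∃ t : ℝ, 0 < t ∧ t < 1 ∧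
      b₀ = t • b₁ + (1 - t) • b₂)
    (hsingleton : ∀ a ∈ K₁, ∀ a' ∈ K₁, f a = b₀ → f a' = b₀ → a = a') :
    Set.InjOn f K₁ :=
  affine_injOn_of_singleton_fiber_general K₁ K₂ hK₁ f hmaps hsurj haff b₀ hinternal hsingleton
end

section
/- Let σ ≥ 2 be an integer and define the sequence p : ℕ → ℤ by p₀ = 0, p₁ = 1, and p_{n+1} = σ·p_n − p_{n−1} for n ≥ 1. Then the pairs (a, b) of nonnegative integers satisfying a² + b² − σ·a·b = 1 are exactly the pairs (p_n, p_{n+1}) and (p_{n+1}, p_n) for n = 0, 1, 2, …. -/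
/-!
Vieta jumping. The form `Q(a, b) = a² + b² − σab` satisfies `Q(σa − b, a) = Q(a, b)`, and the
recurrence maps `(pₙ, pₙ₊₁)` to `(pₙ₊₁, σpₙ₊₁ − pₙ)`, so every consecutive pair has
`Q = Q(0, 1) = 1`. Conversely, for a solution with `0 < a ≤ b` we have `b (σa − b) = a² − 1`,
which forces `0 ≤ σa − b < a`; descending along `(a, b) ↦ (σa − b, a)` ends at `(0, 1)`, and
reading the descent backwards is running the recurrence.
-/

def pellForm {R : Type*} [CommRing R] (σ a b : R) : R := a ^ 2 + b ^ 2 - σ * a * b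

section CommRing

variable {R : Type*} [CommRing R] (σ : R)

theorem pellForm_comm (a b : R) : pellForm σ a b = pellForm σ b a := by
  unfold pellForm; ring

theorem pellForm_vieta (a b : R) : pellForm σ (σ * a - b) a = pellForm σ a b := by
  unfold pellForm; ring

theorem pellForm_zero_left (b : R) : pellForm σ 0 b = b ^ 2 := by
  simp [pellForm]

variable {σ}

theorem pellForm_consecutive {p : ℕ → R} (hrec : ∀ n, p (n + 2) = σ * p (n + 1) - p n)
    (n : ℕ) : pellForm σ (p n) (p (n + 1)) = pellForm σ (p 0) (p 1) := by
  induction n with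
  | zero => rfl
  | succ n ih => rw [hrec, pellForm_comm, pellForm_vieta, pellForm_comm, ih]

end CommRing

theorem pellForm_vieta_descent {σ a b : ℤ} (ha : 0 < a) (hab : a ≤ b) (h : pellForm σ a b = 1) :
    0 ≤ σ * a - b ∧ σ * a - b < a := by
  have hprod : b * (σ * a - b) = a ^ 2 - 1 := by unfold pellForm at h; linear_combination -h
  constructor <;> nlinarith

theorem exists_consecutive_of_pellForm_eq_one {σ : ℤ} {p : ℕ → ℤ} (h0 : p 0 = 0) (h1 : p 1 = 1)
    (hrec : ∀ n, p (n + 2) = σ * p (n + 1) - p n) {a b : ℤ} (ha : 0 ≤ a) (hab : a ≤ b)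
    (h : pellForm σ a b = 1) : ∃ n, a = p n ∧ b = p (n + 1) := by
  rcases ha.eq_or_lt with rfl | ha
  · rw [pellForm_zero_left, sq_eq_one_iff] at h
    exact ⟨0, h0.symm, h.resolve_right (by omega) |>.trans h1.symm⟩
  · obtain ⟨hc, hca⟩ := pellForm_vieta_descent ha hab h
    obtain ⟨n, hn, hn'⟩ :=
      exists_consecutive_of_pellForm_eq_one h0 h1 hrec hc hca.le (by rw [pellForm_vieta, h])
    exact ⟨n + 1, hn', by rw [hrec, ← hn, ← hn']; ring⟩
termination_by a.toNat
decreasing_by omega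

theorem pell_equation_solutions_general (σ : ℤ) (p : ℕ → ℤ)
    (h0 : p 0 = 0) (h1 : p 1 = 1)
    (hrec : ∀ n : ℕ, 1 ≤ n → p (n + 1) = σ * p n - p (n - 1)) :
    ∀ a b : ℤ, 0 ≤ a → 0 ≤ b →
      (a ^ 2 + b ^ 2 - σ * a * b = 1 ↔
        ∃ n : ℕ, (a = p n ∧ b = p (n + 1)) ∨ (a = p (n + 1) ∧ b = p n)) := by
  have hrec₂ : ∀ n, p (n + 2) = σ * p (n + 1) - p n := fun n => hrec (n + 1) n.succ_pos
  have hsol : ∀ n, pellForm σ (p n) (p (n + 1)) = 1 := fun n => by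
    rw [pellForm_consecutive hrec₂, h0, h1, pellForm_zero_left, one_pow]
  intro a b ha hb
  change pellForm σ a b = 1 ↔ _
  constructor
  · intro h
    rcases le_total a b with hab | hba
    · obtain ⟨n, rfl, rfl⟩ := exists_consecutive_of_pellForm_eq_one h0 h1 hrec₂ ha hab h
      exact ⟨n, .inl ⟨rfl, rfl⟩⟩
    · rw [pellForm_comm] at h
      obtain ⟨n, rfl, rfl⟩ := exists_consecutive_of_pellForm_eq_one h0 h1 hrec₂ hb hba h
      exact ⟨n, .inr ⟨rfl, rfl⟩⟩
  · rintro ⟨n, ⟨rfl, rfl⟩ | ⟨rfl, rfl⟩⟩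
    · exact hsol n
    · rw [pellForm_comm]; exact hsol n

/-- For an integer `σ ≥ 2`, the nonnegative integer solutions `(a, b)` of
`a² + b² − σab = 1` are exactly the pairs `(pₙ, p_{n+1})` and `(p_{n+1}, pₙ)`
of consecutive terms of the sequence `p₀ = 0`, `p₁ = 1`, `p_{n+1} = σ pₙ − p_{n−1}`. -/
theorem pell_equation_solutions (σ : ℤ) (hσ : 2 ≤ σ) (p : ℕ → ℤ)
    (h0 : p 0 = 0) (h1 : p 1 = 1)
    (hrec : ∀ n : ℕ, 1 ≤ n → p (n + 1) = σ * p n - p (n - 1)) :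
    ∀ a b : ℤ, 0 ≤ a → 0 ≤ b →
      (a ^ 2 + b ^ 2 - σ * a * b = 1 ↔
        ∃ n : ℕ, (a = p n ∧ b = p (n + 1)) ∨ (a = p (n + 1) ∧ b = p n)) :=
  pell_equation_solutions_general σ p h0 h1 hrec
end

section
/- For an integer σ ≥ 1, define the sequence p : ℕ → ℤ by p₀ = 0, p₁ = 1, and p_{n+1} = σ·p_n − p_{n−1} for n ≥ 1. Then for every even n ≥ 0, the greatest common divisor of p_n and p_{n+2} equals σ. -/
/-!
Consecutive terms are coprime, since `(p n, p (n + 1)) ↦ (p (n + 1), σ p (n + 1) - p n)` preserves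
coprimality. Hence `gcd (p n) (p (n + 2)) = gcd (p n) (σ p (n + 1)) = gcd (p n) σ`, and the
even-indexed terms are multiples of `σ`, because `p (2k + 2) = σ p (2k + 1) - p (2k)` and `p 0 = 0`.
-/

theorem Int.gcd_mul_left_cancel_right_of_isCoprime {a b : ℤ} (c : ℤ) (h : IsCoprime b a) :
    Int.gcd a (b * c) = Int.gcd a c := by
  simpa only [Int.gcd, Int.natAbs_mul] using
    (Int.isCoprime_iff_nat_coprime.mp h).gcd_mul_left_cancel_right c.natAbs

section SecondOrderRecurrence

variable {σ : ℤ} {p : ℕ → ℤ} (hrec : ∀ n, p (n + 2) = σ * p (n + 1) - p n)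
include hrec

theorem isCoprime_succ_of_rec (hp : IsCoprime (p 0) (p 1)) (n : ℕ) :
    IsCoprime (p n) (p (n + 1)) := by
  induction n with
  | zero => exact hp
  | succ n ih =>
    rw [hrec, sub_eq_neg_add, mul_comm]
    exact ih.symm.neg_right.add_mul_left_right σ

theorem dvd_two_mul_of_rec (h0 : p 0 = 0) (k : ℕ) : σ ∣ p (2 * k) := by
  induction k with
  | zero => simp [h0]
  | succ k ih =>
    rw [Nat.mul_succ, hrec]
    exact (dvd_mul_right σ _).sub ih

theorem gcd_add_two_of_rec {n : ℕ} (h : IsCoprime (p n) (p (n + 1))) :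
    Int.gcd (p n) (p (n + 2)) = Int.gcd (p n) σ := by
  rw [hrec, Int.gcd_sub_self_right, mul_comm,
    Int.gcd_mul_left_cancel_right_of_isCoprime σ h.symm]

end SecondOrderRecurrence

/-- For `σ ≥ 1` and even `n`, the greatest common divisor of `pₙ` and `p_{n+2}`
equals `σ`, where `p₀ = 0`, `p₁ = 1`, `p_{n+1} = σ pₙ − p_{n−1}`. -/
theorem pell_seq_gcd_even (σ : ℤ) (hσ : 1 ≤ σ) (p : ℕ → ℤ)
    (h0 : p 0 = 0) (h1 : p 1 = 1)
    (hrec : ∀ n : ℕ, 1 ≤ n → p (n + 1) = σ * p n - p (n - 1)) :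
    ∀ n : ℕ, Even n → (Int.gcd (p n) (p (n + 2)) : ℤ) = σ := by
  have hrec' : ∀ n, p (n + 2) = σ * p (n + 1) - p n := fun n => hrec (n + 1) (by omega)
  rintro n ⟨k, rfl⟩
  have hcop := isCoprime_succ_of_rec hrec' (h0 ▸ h1 ▸ isCoprime_one_right) (k + k)
  rw [gcd_add_two_of_rec hrec' hcop]
  exact Int.gcd_eq_right (by omega) (two_mul k ▸ dvd_two_mul_of_rec hrec' h0 k)
end

section
/- There are no integers k₁ ≥ 2, k₂ ≥ 2, and m ≥ 1 with k₁² + k₂² = m²·k₁²·k₂² + 1. -/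
/-! With `a = k₁²` and `b = k₂²` the equation reads `a + b = m² a b + 1 ≥ a b + 1`, which is
impossible for `a, b > 1` because `(a - 1)(b - 1) > 0`. -/

theorem add_lt_mul_add_one {R : Type*} [CommRing R] [LinearOrder R] [IsStrictOrderedRing R]
    {a b : R} (ha : 1 < a) (hb : 1 < b) : a + b < a * b + 1 := by
  nlinarith [mul_pos (sub_pos.2 ha) (sub_pos.2 hb)]

/-- There are no integers `k₁ ≥ 2`, `k₂ ≥ 2`, `m ≥ 1` with
`k₁² + k₂² = m² k₁² k₂² + 1`. -/
theorem no_solutions_k1_k2_m :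
    ¬ ∃ (k₁ k₂ m : ℤ), 2 ≤ k₁ ∧ 2 ≤ k₂ ∧ 1 ≤ m ∧
      k₁ ^ 2 + k₂ ^ 2 = m ^ 2 * k₁ ^ 2 * k₂ ^ 2 + 1 := by
  rintro ⟨k₁, k₂, m, hk₁, hk₂, hm, h⟩
  have h_le : k₁ ^ 2 * k₂ ^ 2 ≤ m ^ 2 * k₁ ^ 2 * k₂ ^ 2 := by
    rw [mul_assoc]
    exact le_mul_of_one_le_left (by positivity) (one_le_pow₀ hm)
  have h_lt : k₁ ^ 2 + k₂ ^ 2 < k₁ ^ 2 * k₂ ^ 2 + 1 :=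
    add_lt_mul_add_one (one_lt_pow₀ (by omega) two_ne_zero) (one_lt_pow₀ (by omega) two_ne_zero)
  linarith
end

section
/- Let k₁, k₂ ≥ 2 and m ≥ 1 be integers and let α₁, α₂, α₃ be positive integers satisfying α₁·α₂ = k₁² − 1, α₂·α₃ = k₂² − 1, and α₁·α₂ + α₂·α₃ + α₁·α₃ = m²·k₁²·k₂² − 1. Then m = 1, α₂ = 1, α₁ = k₁² − 1, and α₃ = k₂² − 1. -/
/-!
Write `A = k₁²`, `B = k₂²` and `X = α₁α₃`. Multiplying the first two equations gives
`α₂² X = (A - 1)(B - 1)`, while the third gives `X = m²AB - A - B + 1 ≥ (A - 1)(B - 1)`.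
Hence `α₂² X ≤ X` with `X > 0`, forcing `α₂ = 1`; then `X = (A - 1)(B - 1)` says
`m²AB = AB`, so `m = 1`.
-/

theorem Int.eq_one_of_sq_mul_le_self {a x : ℤ} (ha : 0 < a) (hx : 0 < x) (h : a ^ 2 * x ≤ x) :
    a = 1 := by
  have hsq : a ^ 2 ≤ 1 := le_of_mul_le_mul_right (by rwa [one_mul]) hx
  nlinarith

theorem Int.eq_one_of_sq_mul_eq_self {m c : ℤ} (hm : 1 ≤ m) (hc : c ≠ 0) (h : m ^ 2 * c = c) :
    m = 1 := by
  have hsq : m ^ 2 = 1 := mul_right_cancel₀ hc (by rw [h, one_mul])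
  nlinarith

theorem forced_values_general (k₁ k₂ m α₁ α₂ α₃ : ℤ)
    (hm : 1 ≤ m)
    (hα₁ : 0 < α₁) (hα₂ : 0 < α₂) (hα₃ : 0 < α₃)
    (e₁ : α₁ * α₂ = k₁ ^ 2 - 1)
    (e₂ : α₂ * α₃ = k₂ ^ 2 - 1)
    (e₃ : α₁ * α₂ + α₂ * α₃ + α₁ * α₃ = m ^ 2 * k₁ ^ 2 * k₂ ^ 2 - 1) :
    m = 1 ∧ α₂ = 1 ∧ α₁ = k₁ ^ 2 - 1 ∧ α₃ = k₂ ^ 2 - 1 := by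
  have hX : 0 < α₁ * α₃ := mul_pos hα₁ hα₃
  have hAB : 0 < k₁ ^ 2 * k₂ ^ 2 := by nlinarith [mul_pos hα₁ hα₂, mul_pos hα₂ hα₃]
  have h₁₃ : α₁ * α₃ = m ^ 2 * (k₁ ^ 2 * k₂ ^ 2) - k₁ ^ 2 - k₂ ^ 2 + 1 := by linarith
  have key : α₂ ^ 2 * (α₁ * α₃) = (k₁ ^ 2 - 1) * (k₂ ^ 2 - 1) := by
    rw [← e₁, ← e₂]; ring
  have hα₂_one : α₂ = 1 := by
    refine Int.eq_one_of_sq_mul_le_self hα₂ hX ?_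
    nlinarith [mul_le_mul_of_nonneg_right (one_le_pow₀ (n := 2) hm) hAB.le]
  subst hα₂_one
  refine ⟨Int.eq_one_of_sq_mul_eq_self hm hAB.ne' ?_, rfl, by linarith, by linarith⟩
  linarith

/-- If `k₁, k₂ ≥ 2`, `m ≥ 1` are integers and `α₁, α₂, α₃` are positive integers with
`α₁α₂ = k₁² − 1`, `α₂α₃ = k₂² − 1`, and `α₁α₂ + α₂α₃ + α₁α₃ = m²k₁²k₂² − 1`, then
`m = 1`, `α₂ = 1`, `α₁ = k₁² − 1`, and `α₃ = k₂² − 1`. -/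
theorem forced_values (k₁ k₂ m α₁ α₂ α₃ : ℤ)
    (hk₁ : 2 ≤ k₁) (hk₂ : 2 ≤ k₂) (hm : 1 ≤ m)
    (hα₁ : 0 < α₁) (hα₂ : 0 < α₂) (hα₃ : 0 < α₃)
    (e₁ : α₁ * α₂ = k₁ ^ 2 - 1)
    (e₂ : α₂ * α₃ = k₂ ^ 2 - 1)
    (e₃ : α₁ * α₂ + α₂ * α₃ + α₁ * α₃ = m ^ 2 * k₁ ^ 2 * k₂ ^ 2 - 1) :
    m = 1 ∧ α₂ = 1 ∧ α₁ = k₁ ^ 2 - 1 ∧ α₃ = k₂ ^ 2 - 1 :=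
  forced_values_general k₁ k₂ m α₁ α₂ α₃ hm hα₁ hα₂ hα₃ e₁ e₂ e₃
end
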